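/- arXiv:2103.08124 — 2 statements merged into one kernel-verified Lean document; each statement's English description precedes it below -/
import Mathlib

section
/- Let d ≥ 1, k ≥ 2 an integer, Ω a skew-symmetric (d+1)×(d+1) real matrix and X : [0,∞) → ℝ^{d+1} continuous. Let x_1, …, x_{2k} : [0,∞) → S^d be differentiable curves each satisfying ẋ(t) = Ωx(t) + X(t) − ⟨x(t),X(t)⟩x(t), such that x_j(0) ≠ x_{j+1}(0) for j = 1,…,2k−1 and x_{2k}(0) ≠ x_1(0). Then C_k(x_1(t), …, x_{2k}(t)) = C_k(x_1(0), …, x_{2k}(0)) for all t ≥ 0. -/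
/-! Along the vector model the rotation `Ω` does not change distances, and the squared chordal
distance `D = ‖x - y‖²` of two solutions satisfies the linear equation
`D' = -(⟪x, X⟫ + ⟪y, X⟫) D`. Hence `‖x_j - x_{j+1}‖²` is its initial value times
`exp (-(A_j + A_{j+1}))` with `A_j = ∫₀ᵗ ⟪x_j, X⟫`, and in the alternating ratio `C_k` these
exponents telescope to `A_{2k+1} - A_1 = 0`. -/

open MeasureTheory Metric Filter Matrix
open scoped RealInnerProductSpace

noncomputable abbrev Euc (d : ℕ) : Type := EuclideanSpace ℝ (Fin (d+1))

open Set Finset Real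

theorem Matrix.inner_toEuclideanLin_self_eq_zero {n : Type*} [Fintype n] [DecidableEq n]
    {Ω : Matrix n n ℝ} (hΩ : Ωᵀ = -Ω) (v : EuclideanSpace ℝ n) :
    ⟪toEuclideanLin Ω v, v⟫ = 0 := by
  have h : ⟪toEuclideanLin Ω v, v⟫ = ⟪v, toEuclideanLin Ωᵀ v⟫ := by
    rw [← conjTranspose_eq_transpose_of_trivial, toEuclideanLin_conjTranspose_eq_adjoint,
      LinearMap.adjoint_inner_right]
  rw [hΩ, map_neg, LinearMap.neg_apply, inner_neg_right, real_inner_comm] at h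
  rw [real_inner_comm]
  linarith

theorem hasDerivWithinAt_norm_sub_sq_of_sphere {E : Type*} [NormedAddCommGroup E]
    [InnerProductSpace ℝ E] {A : E →ₗ[ℝ] E} (hA : ∀ v, ⟪A v, v⟫ = 0)
    {w : E} {x y : ℝ → E} {s : Set ℝ} {t : ℝ}
    (hx : HasDerivWithinAt x (A (x t) + w - ⟪x t, w⟫ • x t) s t)
    (hy : HasDerivWithinAt y (A (y t) + w - ⟪y t, w⟫ • y t) s t)
    (hx1 : ‖x t‖ = 1) (hy1 : ‖y t‖ = 1) :
    HasDerivWithinAt (fun u => ‖x u - y u‖ ^ 2)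
      (-(⟪x t, w⟫ + ⟪y t, w⟫) * ‖x t - y t‖ ^ 2) s t := by
  refine (hx.sub hy).norm_sq.congr_deriv ?_
  have hsplit : A (x t) + w - ⟪x t, w⟫ • x t - (A (y t) + w - ⟪y t, w⟫ • y t)
      = A (x t - y t) - (⟪x t, w⟫ • x t - ⟪y t, w⟫ • y t) := by
    rw [map_sub]; abel
  rw [Pi.sub_apply, hsplit, inner_sub_right, real_inner_comm, hA, norm_sub_sq_real, hx1, hy1]
  simp only [inner_sub_left, inner_sub_right, real_inner_smul_right, real_inner_self_eq_norm_sq,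
    hx1, hy1, real_inner_comm (x t) (y t)]
  ring

theorem eq_mul_exp_sub_of_hasDerivWithinAt {v G g : ℝ → ℝ} {s : Set ℝ} (hs : Convex ℝ s)
    (hv : ∀ u ∈ s, HasDerivWithinAt v (g u * v u) s u)
    (hG : ∀ u ∈ s, HasDerivWithinAt G (g u) s u) {a b : ℝ} (ha : a ∈ s) (hb : b ∈ s) :
    v b = v a * exp (G b - G a) := by
  have hconst : ∀ u ∈ s, HasDerivWithinAt (fun u => v u * exp (-G u)) 0 s u := fun u hu => by
    refine ((hv u hu).mul (hG u hu).neg.exp).congr_deriv ?_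
    simp only [Pi.neg_apply]
    ring
  have := hs.norm_image_sub_le_of_norm_hasDerivWithin_le hconst (C := 0) (by simp) ha hb
  rw [zero_mul, norm_le_zero_iff, sub_eq_zero] at this
  calc v b = v b * exp (-G b) * exp (G b) := by
        rw [mul_assoc, ← exp_add, neg_add_cancel, exp_zero, mul_one]
    _ = v a * exp (G b - G a) := by
        rw [this, mul_assoc, ← exp_add, neg_add_eq_sub]

theorem hasDerivWithinAt_intervalIntegral_Icc {f : ℝ → ℝ} {a b u : ℝ}
    (hf : ContinuousOn f (Icc a b)) (hu : u ∈ Icc a b) :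
    HasDerivWithinAt (fun t => ∫ s in a..t, f s) (f u) (Icc a b) u := by
  have : Fact (u ∈ Icc a b) := ⟨hu⟩
  refine intervalIntegral.integral_hasDerivWithinAt_right ?_
    (hf.stronglyMeasurableAtFilter_nhdsWithin measurableSet_Icc u) (hf u hu)
  refine (hf.mono ?_).intervalIntegrable
  rw [uIcc_of_le hu.1]
  exact Icc_subset_Icc_right hu.2

theorem prod_range_div_eq_of_eq_mul_exp (k : ℕ) {D D₀ B : ℕ → ℝ} (hB : B (2*k+1) = B 1)
    (hD : ∀ j, 1 ≤ j → j ≤ 2*k → D j = D₀ j * exp (-(B j + B (j+1)))) :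
    ∏ ℓ ∈ range k, D (2*ℓ+1) / D (2*ℓ+2) = ∏ ℓ ∈ range k, D₀ (2*ℓ+1) / D₀ (2*ℓ+2) := by
  have hfactor : ∀ ℓ ∈ range k, D (2*ℓ+1) / D (2*ℓ+2)
      = D₀ (2*ℓ+1) / D₀ (2*ℓ+2) * exp (B (2*(ℓ+1)+1) - B (2*ℓ+1)) := fun ℓ hℓ => by
    have hℓ := mem_range.mp hℓ
    rw [hD _ (by omega) (by omega), hD _ (by omega) (by omega), mul_div_mul_comm, ← exp_sub]
    ring_nf
  rw [prod_congr rfl hfactor, prod_mul_distrib, ← exp_sum,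
    sum_range_sub (fun ℓ => B (2*ℓ+1)), hB, sub_self, exp_zero, mul_one]

theorem Ck_constant_of_motion_general
    (d k : ℕ)
    (Ω : Matrix (Fin (d+1)) (Fin (d+1)) ℝ) (hΩ : Ωᵀ = -Ω)
    (X : ℝ → Euc d) (hX : ContinuousOn X (Set.Ici 0))
    (x : ℕ → ℝ → Euc d)
    (hper : x (2*k+1) = x 1)
    (hS : ∀ j, 1 ≤ j → j ≤ 2*k → ∀ t ≥ (0:ℝ), ‖x j t‖ = 1)
    (hODE : ∀ j, 1 ≤ j → j ≤ 2*k → ∀ t ≥ (0:ℝ), HasDerivWithinAt (x j)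
      (Matrix.toEuclideanLin Ω (x j t) + X t - ⟪x j t, X t⟫ • x j t) (Set.Ici 0) t) :
    ∀ t ≥ (0:ℝ),
      (∏ ℓ ∈ Finset.range k, ‖x (2*ℓ+1) t - x (2*ℓ+2) t‖ ^ 2 / ‖x (2*ℓ+2) t - x (2*ℓ+3) t‖ ^ 2)
      = ∏ ℓ ∈ Finset.range k,
          ‖x (2*ℓ+1) 0 - x (2*ℓ+2) 0‖ ^ 2 / ‖x (2*ℓ+2) 0 - x (2*ℓ+3) 0‖ ^ 2 := by
  intro t ht
  obtain rfl | hk := Nat.eq_zero_or_pos k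
  · simp
  have hsol : ∀ j, 1 ≤ j → j ≤ 2*k+1 → ∀ u ∈ Icc 0 t, ‖x j u‖ = 1 ∧ HasDerivWithinAt (x j)
      (Matrix.toEuclideanLin Ω (x j u) + X u - ⟪x j u, X u⟫ • x j u) (Icc 0 t) u := by
    intro j hj₁ hj₂ u hu
    obtain hj | rfl : j ≤ 2*k ∨ j = 2*k+1 := by omega
    · exact ⟨hS j hj₁ hj u hu.1, (hODE j hj₁ hj u hu.1).mono Icc_subset_Ici_self⟩
    · rw [hper]
      exact ⟨hS 1 le_rfl (by omega) u hu.1,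
        (hODE 1 le_rfl (by omega) u hu.1).mono Icc_subset_Ici_self⟩
  set A : ℕ → ℝ → ℝ := fun j u => ∫ s in (0:ℝ)..u, ⟪x j s, X s⟫
  have hA : ∀ j, 1 ≤ j → j ≤ 2*k+1 → ∀ u ∈ Icc 0 t,
      HasDerivWithinAt (A j) ⟪x j u, X u⟫ (Icc 0 t) u := fun j hj₁ hj₂ u hu =>
    hasDerivWithinAt_intervalIntegral_Icc
      (ContinuousOn.inner (fun v hv => (hsol j hj₁ hj₂ v hv).2.continuousWithinAt)
        (hX.mono Icc_subset_Ici_self)) hu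
  have hD : ∀ j, 1 ≤ j → j ≤ 2*k → ‖x j t - x (j+1) t‖ ^ 2
      = ‖x j 0 - x (j+1) 0‖ ^ 2 * exp (-(A j t + A (j+1) t)) := by
    intro j hj₁ hj₂
    have h := eq_mul_exp_sub_of_hasDerivWithinAt (convex_Icc 0 t)
      (fun u hu => hasDerivWithinAt_norm_sub_sq_of_sphere
        (Matrix.inner_toEuclideanLin_self_eq_zero hΩ)
        (hsol j hj₁ (by omega) u hu).2 (hsol (j+1) (by omega) (by omega) u hu).2
        (hsol j hj₁ (by omega) u hu).1 (hsol (j+1) (by omega) (by omega) u hu).1)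
      (fun u hu => ((hA j hj₁ (by omega) u hu).add (hA (j+1) (by omega) (by omega) u hu)).neg)
      (left_mem_Icc.2 ht) (right_mem_Icc.2 ht)
    simpa [A] using h
  exact prod_range_div_eq_of_eq_mul_exp k (B := fun j => A j t) (by simp only [A, hper]) hD

/-- the generalized cross ratio `C_k` along a cycle of length `2k` is a constant
of motion for the vector model on the sphere.  The curves are indexed `x 1, …, x (2k)` with the
convention `x (2k+1) = x 1`. -/
theorem Ck_constant_of_motion
    (d k : ℕ) (hd : 1 ≤ d) (hk : 2 ≤ k)
    (Ω : Matrix (Fin (d+1)) (Fin (d+1)) ℝ) (hΩ : Ωᵀ = -Ω)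
    (X : ℝ → Euc d) (hX : ContinuousOn X (Set.Ici 0))
    (x : ℕ → ℝ → Euc d)
    (hper : x (2*k+1) = x 1)
    (hS : ∀ j, 1 ≤ j → j ≤ 2*k → ∀ t ≥ (0:ℝ), ‖x j t‖ = 1)
    (hODE : ∀ j, 1 ≤ j → j ≤ 2*k → ∀ t ≥ (0:ℝ), HasDerivWithinAt (x j)
      (Matrix.toEuclideanLin Ω (x j t) + X t - ⟪x j t, X t⟫ • x j t) (Set.Ici 0) t)
    (hneq : ∀ j, 1 ≤ j → j ≤ 2*k - 1 → x j 0 ≠ x (j+1) 0)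
    (hlast : x (2*k) 0 ≠ x 1 0) :
    ∀ t ≥ (0:ℝ),
      (∏ ℓ ∈ Finset.range k, ‖x (2*ℓ+1) t - x (2*ℓ+2) t‖ ^ 2 / ‖x (2*ℓ+2) t - x (2*ℓ+3) t‖ ^ 2)
      = ∏ ℓ ∈ Finset.range k,
          ‖x (2*ℓ+1) 0 - x (2*ℓ+2) 0‖ ^ 2 / ‖x (2*ℓ+2) 0 - x (2*ℓ+3) 0‖ ^ 2 :=
  Ck_constant_of_motion_general d k Ω hΩ X hX x hper hS hODE
end

section
/- Let d ≥ 1, let Ω be a skew-symmetric (d+1)×(d+1) real matrix and X : [0,∞) → ℝ^{d+1} continuous. Suppose w : [0,∞) → ℝ^{d+1} is differentiable with w(0) = 0, ẇ(t) = Ωw(t) + (1/2)(1+‖w(t)‖²)X(t) − ⟨w(t),X(t)⟩w(t), and ‖w(t)‖ < 1 for all t ≥ 0; and suppose R : [0,∞) → ℝ^{(d+1)×(d+1)} is differentiable with R(0) = I and Ṙ(t) = (Ω + X(t)w(t)ᵀ − w(t)X(t)ᵀ)R(t). Then R(t) is an orthogonal matrix for every t ≥ 0, and for each x ∈ S^d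 the curve m(t) := w(t) + (R(t)x + w(t))(1 − ‖w(t)‖²)/‖R(t)x + w(t)‖² satisfies m(0) = x, m(t) ∈ S^d for all t ≥ 0, and ṁ(t) = Ωm(t) + X(t) − ⟨m(t), X(t)⟩m(t) for all t ≥ 0. -/
/-!
Put `A t = Ω + X wᵀ - w Xᵀ`. It is skew-symmetric, so `(R t)ᵀ R t` has zero derivative and `R`
stays orthogonal; hence `v = R x` stays on the sphere and solves `v' = A v`. The curve `m` is the
image of `v` under the Möbius map `v ↦ w + (1 - ‖w‖²) / ‖v + w‖² • (v + w)`, which preserves the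
sphere. With `u = v + w` and `c = (1 - ‖w‖²) / ‖u‖²`, the Riccati equation for `w` gives
`u' = Ω u + ½‖u‖² X - ⟪X, u⟫ w`, `(‖u‖²)' = (1 - ‖w‖²) ⟪X, u⟫` and `c' = -c ⟪w, X⟫ - c² ⟪X, u⟫`;
substituting into `m' = w' + c' u + c u'` gives the vector model.
-/

open MeasureTheory Metric Filter Matrix
open scoped RealInnerProductSpace

namespace Matrix

theorem transpose_add_vecMulVec_sub_vecMulVec {n α : Type*} [CommRing α] {Ω : Matrix n n α}
    (hΩ : Ωᵀ = -Ω) (a b : n → α) :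
    (Ω + vecMulVec a b - vecMulVec b a)ᵀ = -(Ω + vecMulVec a b - vecMulVec b a) := by
  rw [transpose_sub, transpose_add, hΩ, transpose_vecMulVec, transpose_vecMulVec]
  abel

variable {m n : Type*} [Fintype n]

theorem real_inner_toEuclideanLin_left [DecidableEq n] [Fintype m] [DecidableEq m]
    (A : Matrix m n ℝ) (x : EuclideanSpace ℝ n) (y : EuclideanSpace ℝ m) :
    ⟪toEuclideanLin A x, y⟫ = ⟪x, toEuclideanLin Aᵀ y⟫ := by
  rw [← conjTranspose_eq_transpose_of_trivial, toEuclideanLin_conjTranspose_eq_adjoint,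
    LinearMap.adjoint_inner_right]

theorem real_inner_self_toEuclideanLin_of_transpose_eq_neg [DecidableEq n] {A : Matrix n n ℝ}
    (hA : Aᵀ = -A) (x : EuclideanSpace ℝ n) : ⟪x, toEuclideanLin A x⟫ = 0 := by
  have h := real_inner_toEuclideanLin_left A x x
  rw [hA, map_neg, LinearMap.neg_apply, inner_neg_right, real_inner_comm] at h
  linarith

theorem norm_toEuclideanLin_of_transpose_mul_self_eq_one [DecidableEq n] {A : Matrix n n ℝ}
    (hA : Aᵀ * A = 1) (x : EuclideanSpace ℝ n) : ‖toEuclideanLin A x‖ = ‖x‖ := by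
  refine (sq_eq_sq₀ (norm_nonneg _) (norm_nonneg _)).1 ?_
  rw [← real_inner_self_eq_norm_sq, ← real_inner_self_eq_norm_sq, real_inner_toEuclideanLin_left,
    ← LinearMap.comp_apply, ← toLpLin_mul_same, hA, toLpLin_one, LinearMap.id_apply]

theorem toEuclideanLin_vecMulVec [DecidableEq n] (a : EuclideanSpace ℝ m)
    (b x : EuclideanSpace ℝ n) :
    toEuclideanLin (vecMulVec (WithLp.ofLp a) (WithLp.ofLp b)) x = ⟪b, x⟫ • a := by
  ext i
  simp [toLpLin_apply, vecMulVec_mulVec, EuclideanSpace.inner_eq_star_dotProduct, dotProduct_comm]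

theorem toEuclideanLin_add_vecMulVec_sub_vecMulVec [DecidableEq n] (Ω : Matrix n n ℝ)
    (a b v : EuclideanSpace ℝ n) :
    toEuclideanLin (Ω + vecMulVec (WithLp.ofLp a) (WithLp.ofLp b)
      - vecMulVec (WithLp.ofLp b) (WithLp.ofLp a)) v
      = toEuclideanLin Ω v + ⟪b, v⟫ • a - ⟪a, v⟫ • b := by
  rw [map_sub, map_add, LinearMap.sub_apply, LinearMap.add_apply, toEuclideanLin_vecMulVec,
    toEuclideanLin_vecMulVec]

theorem hasDerivWithinAt_toEuclideanLin_apply [DecidableEq n] [Fintype m] {R : ℝ → Matrix m n ℝ}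
    {R' : Matrix m n ℝ} {s : Set ℝ} {t : ℝ}
    (hR : ∀ i j, HasDerivWithinAt (fun τ => R τ i j) (R' i j) s t) (x : EuclideanSpace ℝ n) :
    HasDerivWithinAt (fun τ => toEuclideanLin (R τ) x) (toEuclideanLin R' x) s t := by
  have hpi : HasDerivWithinAt (fun τ => R τ *ᵥ WithLp.ofLp x) (R' *ᵥ WithLp.ofLp x) s t :=
    hasDerivWithinAt_pi.2 fun i => HasDerivWithinAt.fun_sum fun j _ => (hR i j).mul_const (x j)
  exact (PiLp.hasFDerivAt_toLp 2 _).comp_hasDerivWithinAt t hpi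

theorem hasDerivWithinAt_transpose_mul_self_apply {R : ℝ → Matrix n n ℝ} {R' : Matrix n n ℝ}
    {s : Set ℝ} {t : ℝ} (hR : ∀ i j, HasDerivWithinAt (fun τ => R τ i j) (R' i j) s t) (i j : n) :
    HasDerivWithinAt (fun τ => ((R τ)ᵀ * R τ) i j) ((R'ᵀ * R t + (R t)ᵀ * R') i j) s t := by
  simp only [mul_apply, transpose_apply, add_apply, ← Finset.sum_add_distrib]
  exact HasDerivWithinAt.fun_sum fun k _ => (hR k i).mul (hR k j)

theorem transpose_mul_self_eq_of_hasDerivWithinAt {R A : ℝ → Matrix n n ℝ} {a : ℝ}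
    (hA : ∀ t ≥ a, (A t)ᵀ = -A t)
    (hR : ∀ t ≥ a, ∀ i j, HasDerivWithinAt (fun τ => R τ i j) ((A t * R t) i j) (Set.Ici a) t)
    {t : ℝ} (ht : a ≤ t) : (R t)ᵀ * R t = (R a)ᵀ * R a := by
  have hgram : ∀ τ ≥ a, ∀ i j,
      HasDerivWithinAt (fun σ => ((R σ)ᵀ * R σ) i j) 0 (Set.Ici a) τ := by
    intro τ hτ i j
    have hzero : (A τ * R τ)ᵀ * R τ + (R τ)ᵀ * (A τ * R τ) = 0 := by
      rw [transpose_mul, hA τ hτ]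
      noncomm_ring
    simpa only [hzero, zero_apply] using hasDerivWithinAt_transpose_mul_self_apply (hR τ hτ) i j
  ext i j
  exact constant_of_has_deriv_right_zero
    (fun τ hτ => (hgram τ hτ.1 i j).continuousWithinAt.mono Set.Icc_subset_Ici_self)
    (fun τ hτ => (hgram τ hτ.1 i j).mono (Set.Ici_subset_Ici.2 hτ.1)) t ⟨ht, le_rfl⟩

end Matrix

theorem add_ne_zero_of_norm_eq_one_of_norm_lt_one {E : Type*} [SeminormedAddCommGroup E]
    {v w : E} (hv : ‖v‖ = 1) (hw : ‖w‖ < 1) : v + w ≠ 0 := by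
  intro h
  rw [eq_neg_of_add_eq_zero_right h, norm_neg] at hw
  exact hw.ne hv

variable {E : Type*} [NormedAddCommGroup E] [InnerProductSpace ℝ E]

noncomputable def mobius (w v : E) : E := w + ((1 - ‖w‖ ^ 2) / ‖v + w‖ ^ 2) • (v + w)

noncomputable def riccatiField (L : E →ₗ[ℝ] E) (X w : E) : E :=
  L w + ((1 / 2) * (1 + ‖w‖ ^ 2)) • X - ⟪w, X⟫ • w

def vectorModelField (L : E →ₗ[ℝ] E) (X m : E) : E := L m + X - ⟪m, X⟫ • m

theorem mobius_zero_left {v : E} (hv : ‖v‖ = 1) : mobius 0 v = v := by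
  simp [mobius, hv]

theorem norm_add_sq_of_norm_eq_one {v w : E} (hv : ‖v‖ = 1) :
    ‖v + w‖ ^ 2 = 1 + 2 * ⟪w, v⟫ + ‖w‖ ^ 2 := by
  rw [norm_add_sq_real, hv, real_inner_comm]; ring

theorem norm_mobius {w v : E} (hv : ‖v‖ = 1) (hvw : v + w ≠ 0) : ‖mobius w v‖ = 1 := by
  have hq : ‖v + w‖ ^ 2 ≠ 0 := by positivity
  refine (pow_eq_one_iff_of_nonneg (norm_nonneg _) two_ne_zero).1 ?_
  rw [mobius, norm_add_sq_real, norm_smul, mul_pow, Real.norm_eq_abs, sq_abs, inner_smul_right,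
    inner_add_right, real_inner_self_eq_norm_sq]
  rw [norm_add_sq_of_norm_eq_one hv] at hq ⊢
  field_simp
  ring

section Flow

variable {L : E →ₗ[ℝ] E} {X : E} {w v : ℝ → E} {s : Set ℝ} {t : ℝ}

theorem hasDerivWithinAt_norm_sq_of_riccati (hL : ∀ y, ⟪y, L y⟫ = 0)
    (hw : HasDerivWithinAt w (riccatiField L X (w t)) s t) :
    HasDerivWithinAt (fun τ => ‖w τ‖ ^ 2) ((1 - ‖w t‖ ^ 2) * ⟪w t, X⟫) s t := by
  convert hw.norm_sq using 1
  simp only [riccatiField, inner_sub_right, inner_add_right, inner_smul_right, hL,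
    real_inner_self_eq_norm_sq]
  ring

theorem hasDerivWithinAt_add_of_riccati (hw : HasDerivWithinAt w (riccatiField L X (w t)) s t)
    (hv : HasDerivWithinAt v (L (v t) + ⟪w t, v t⟫ • X - ⟪X, v t⟫ • w t) s t)
    (hvn : ‖v t‖ = 1) :
    HasDerivWithinAt (fun τ => v τ + w τ)
      (L (v t + w t) + (‖v t + w t‖ ^ 2 / 2) • X - ⟪X, v t + w t⟫ • w t) s t := by
  convert hv.fun_add hw using 1
  rw [riccatiField, norm_add_sq_of_norm_eq_one hvn, map_add, inner_add_right,
    real_inner_comm X (w t)]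
  module

theorem hasDerivWithinAt_norm_add_sq_of_riccati (hL : ∀ y, ⟪y, L y⟫ = 0)
    (hw : HasDerivWithinAt w (riccatiField L X (w t)) s t)
    (hv : HasDerivWithinAt v (L (v t) + ⟪w t, v t⟫ • X - ⟪X, v t⟫ • w t) s t)
    (hvn : ‖v t‖ = 1) :
    HasDerivWithinAt (fun τ => ‖v τ + w τ‖ ^ 2) ((1 - ‖w t‖ ^ 2) * ⟪X, v t + w t⟫) s t := by
  convert (hasDerivWithinAt_add_of_riccati hw hv hvn).norm_sq using 1
  have huw : ⟪v t + w t, w t⟫ = ‖v t + w t‖ ^ 2 / 2 - (1 - ‖w t‖ ^ 2) / 2 := by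
    rw [norm_add_sq_of_norm_eq_one hvn, inner_add_left, real_inner_self_eq_norm_sq,
      real_inner_comm]
    ring
  set u := v t + w t
  rw [inner_sub_right, inner_add_right u (L u), hL, inner_smul_right, inner_smul_right, huw,
    real_inner_comm X]
  ring

theorem hasDerivWithinAt_mobius_coeff (hL : ∀ y, ⟪y, L y⟫ = 0)
    (hw : HasDerivWithinAt w (riccatiField L X (w t)) s t)
    (hv : HasDerivWithinAt v (L (v t) + ⟪w t, v t⟫ • X - ⟪X, v t⟫ • w t) s t)
    (hvn : ‖v t‖ = 1) (hvw : v t + w t ≠ 0) :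
    HasDerivWithinAt (fun τ => (1 - ‖w τ‖ ^ 2) / ‖v τ + w τ‖ ^ 2)
      (-((1 - ‖w t‖ ^ 2) / ‖v t + w t‖ ^ 2) * ⟪w t, X⟫
        - ((1 - ‖w t‖ ^ 2) / ‖v t + w t‖ ^ 2) ^ 2 * ⟪X, v t + w t⟫) s t := by
  have hq : ‖v t + w t‖ ^ 2 ≠ 0 := by positivity
  refine (((hasDerivWithinAt_norm_sq_of_riccati hL hw).const_sub 1).fun_div
    (hasDerivWithinAt_norm_add_sq_of_riccati hL hw hv hvn) hq).congr_deriv ?_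
  field_simp

theorem hasDerivWithinAt_mobius (hL : ∀ y, ⟪y, L y⟫ = 0)
    (hw : HasDerivWithinAt w (riccatiField L X (w t)) s t)
    (hv : HasDerivWithinAt v (L (v t) + ⟪w t, v t⟫ • X - ⟪X, v t⟫ • w t) s t)
    (hvn : ‖v t‖ = 1) (hvw : v t + w t ≠ 0) :
    HasDerivWithinAt (fun τ => mobius (w τ) (v τ)) (vectorModelField L X (mobius (w t) (v t)))
      s t := by
  have hq : ‖v t + w t‖ ^ 2 ≠ 0 := by positivity
  refine (hw.fun_add ((hasDerivWithinAt_mobius_coeff hL hw hv hvn hvw).fun_smul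
    (hasDerivWithinAt_add_of_riccati hw hv hvn))).congr_deriv ?_
  simp only [vectorModelField, riccatiField, mobius, map_add, map_smul, real_inner_comm X,
    inner_add_right, real_inner_smul_right]
  match_scalars <;> field_simp <;> ring

end Flow

theorem ws_transform_solves_vector_model_general
    (d : ℕ)
    (Ω : Matrix (Fin (d+1)) (Fin (d+1)) ℝ) (hΩ : Ωᵀ = -Ω)
    (X : ℝ → Euc d)
    (w : ℝ → Euc d) (hw0 : w 0 = 0) (hwlt : ∀ t ≥ (0:ℝ), ‖w t‖ < 1)
    (hw : ∀ t ≥ (0:ℝ), HasDerivWithinAt w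
      (Matrix.toEuclideanLin Ω (w t) + ((1/2) * (1 + ‖w t‖ ^ 2)) • X t
        - ⟪w t, X t⟫ • w t) (Set.Ici 0) t)
    (R : ℝ → Matrix (Fin (d+1)) (Fin (d+1)) ℝ) (hR0 : R 0 = 1)
    (hR : ∀ t ≥ (0:ℝ), ∀ i j, HasDerivWithinAt (fun s => R s i j)
      (((Ω + Matrix.of (fun i j => X t i * w t j)
          - Matrix.of (fun i j => w t i * X t j)) * R t) i j) (Set.Ici 0) t) :
    (∀ t ≥ (0:ℝ), R t * (R t)ᵀ = 1) ∧
    ∀ x : Euc d, ‖x‖ = 1 →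
      ∀ m : ℝ → Euc d,
        (m = fun t => w t +
          ((1 - ‖w t‖ ^ 2) / ‖Matrix.toEuclideanLin (R t) x + w t‖ ^ 2) •
            (Matrix.toEuclideanLin (R t) x + w t)) →
        m 0 = x ∧ (∀ t ≥ (0:ℝ), ‖m t‖ = 1) ∧
        ∀ t ≥ (0:ℝ), HasDerivWithinAt m
          (Matrix.toEuclideanLin Ω (m t) + X t - ⟪m t, X t⟫ • m t) (Set.Ici 0) t := by
  set A : ℝ → Matrix (Fin (d+1)) (Fin (d+1)) ℝ := fun τ =>
    Ω + vecMulVec (WithLp.ofLp (X τ)) (WithLp.ofLp (w τ))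
      - vecMulVec (WithLp.ofLp (w τ)) (WithLp.ofLp (X τ))
  have horth : ∀ t ≥ (0:ℝ), (R t)ᵀ * R t = 1 := fun t ht => by
    simpa only [hR0, transpose_one, mul_one] using transpose_mul_self_eq_of_hasDerivWithinAt
      (A := A) (fun τ _ => transpose_add_vecMulVec_sub_vecMulVec hΩ _ _) hR ht
  refine ⟨fun t ht => mul_eq_one_comm.mp (horth t ht), fun x hx m hm => ?_⟩
  subst hm
  have hRx : ∀ t ≥ (0:ℝ), ‖toEuclideanLin (R t) x‖ = 1 := fun t ht => by
    rw [norm_toEuclideanLin_of_transpose_mul_self_eq_one (horth t ht), hx]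
  have hne : ∀ t ≥ (0:ℝ), toEuclideanLin (R t) x + w t ≠ 0 := fun t ht =>
    add_ne_zero_of_norm_eq_one_of_norm_lt_one (hRx t ht) (hwlt t ht)
  have hm0 : mobius (w 0) (toEuclideanLin (R 0) x) = x := by
    rw [hw0, hR0, toLpLin_one, LinearMap.id_apply, mobius_zero_left hx]
  refine ⟨hm0, fun t ht => norm_mobius (hRx t ht) (hne t ht),
    fun t ht => hasDerivWithinAt_mobius (real_inner_self_toEuclideanLin_of_transpose_eq_neg hΩ)
      (hw t ht) ?_ (hRx t ht) (hne t ht)⟩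
  refine (hasDerivWithinAt_toEuclideanLin_apply (R' := A t * R t) (hR t ht) x).congr_deriv ?_
  rw [toLpLin_mul_same, LinearMap.comp_apply, toEuclideanLin_add_vecMulVec_sub_vecMulVec]

/-- if `w` solves the Riccati-type equation and `R` solves the linear matrix
equation of the Watanabe–Strogatz transform, then `R(t)` is orthogonal for all `t ≥ 0` and,
for every point `x` of the sphere, the curve
`m(t) = w(t) + (R(t)x + w(t))(1 − ‖w(t)‖²)/‖R(t)x + w(t)‖²` starts at `x`, stays on the
sphere, and solves the vector model. -/
theorem ws_transform_solves_vector_model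
    (d : ℕ) (hd : 1 ≤ d)
    (Ω : Matrix (Fin (d+1)) (Fin (d+1)) ℝ) (hΩ : Ωᵀ = -Ω)
    (X : ℝ → Euc d) (hX : ContinuousOn X (Set.Ici 0))
    (w : ℝ → Euc d) (hw0 : w 0 = 0) (hwlt : ∀ t ≥ (0:ℝ), ‖w t‖ < 1)
    (hw : ∀ t ≥ (0:ℝ), HasDerivWithinAt w
      (Matrix.toEuclideanLin Ω (w t) + ((1/2) * (1 + ‖w t‖ ^ 2)) • X t
        - ⟪w t, X t⟫ • w t) (Set.Ici 0) t)
    (R : ℝ → Matrix (Fin (d+1)) (Fin (d+1)) ℝ) (hR0 : R 0 = 1)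
    (hR : ∀ t ≥ (0:ℝ), ∀ i j, HasDerivWithinAt (fun s => R s i j)
      (((Ω + Matrix.of (fun i j => X t i * w t j)
          - Matrix.of (fun i j => w t i * X t j)) * R t) i j) (Set.Ici 0) t) :
    (∀ t ≥ (0:ℝ), R t * (R t)ᵀ = 1) ∧
    ∀ x : Euc d, ‖x‖ = 1 →
      ∀ m : ℝ → Euc d,
        (m = fun t => w t +
          ((1 - ‖w t‖ ^ 2) / ‖Matrix.toEuclideanLin (R t) x + w t‖ ^ 2) •
            (Matrix.toEuclideanLin (R t) x + w t)) →
        m 0 = x ∧ (∀ t ≥ (0:ℝ), ‖m t‖ = 1) ∧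
        ∀ t ≥ (0:ℝ), HasDerivWithinAt m
          (Matrix.toEuclideanLin Ω (m t) + X t - ⟪m t, X t⟫ • m t) (Set.Ici 0) t :=
  ws_transform_solves_vector_model_general d Ω hΩ X w hw0 hwlt hw R hR0 hR
end
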